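/- arXiv:1711.07896 — 8 statements merged into one kernel-verified Lean document; each statement's English description precedes it below -/
import Mathlib

section
/- Let (sₖ)ₖ≥₁ be a sequence of positive integers with s₁ = 1, let (wᵢ)ᵢ≥₀ be a sequence in GL(2,ℂ) satisfying w_{i+1} = wᵢ^{s_{i+1}} w_{i-1} for all i ≥ 1, and let N ∈ GL(2,ℂ) with w₁w₀Nᵀ = w₀w₁N. Define Nₖ = N if k is even and Nₖ = Nᵀ if k is odd. Then for all k ≥ 1, w_{k-1} wₖ N_{k+1} = wₖ w_{k-1} Nₖ. -/
/-!
The relation `w (k - 1) * w k * X = w k * w (k - 1) * Y` propagates along the recurrence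
`w (k + 1) = w k ^ s (k + 1) * w (k - 1)` because `w k` commutes with its own powers, and each step
exchanges `X` and `Y`.
-/

open Matrix

theorem pow_mul_mul_twist {M : Type*} [Monoid M] {a b x y : M} (h : b * a * x = a * b * y)
    (n : ℕ) : a * (a ^ n * b) * y = a ^ n * b * a * x :=
  calc a * (a ^ n * b) * y = a ^ n * (a * b * y) := by
        rw [← mul_assoc, (Commute.self_pow a n).eq]; simp only [mul_assoc]
    _ = a ^ n * (b * a * x) := by rw [h]
    _ = a ^ n * b * a * x := by simp only [mul_assoc]

theorem twist_of_pow_mul_recurrence {M : Type*} [Monoid M] (e : ℕ → ℕ) (w : ℕ → M)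
    (hrec : ∀ i, 1 ≤ i → w (i + 1) = w i ^ e (i + 1) * w (i - 1)) (x y : M)
    (h : w 1 * w 0 * y = w 0 * w 1 * x) (n : ℕ) :
    w n * w (n + 1) * (if Even n then x else y) =
      w (n + 1) * w n * (if Even n then y else x) := by
  induction n with
  | zero => simpa using h.symm
  | succ n ih =>
    rw [hrec (n + 1) n.succ_pos, Nat.add_sub_cancel]
    simpa only [Nat.even_add_one, ite_not] using pow_mul_mul_twist ih (e (n + 1 + 1))

theorem stmt1_general (s : ℕ → ℕ)
    (w : ℕ → Matrix (Fin 2) (Fin 2) ℂ)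
    (hrec : ∀ i, 1 ≤ i → w (i + 1) = w i ^ s (i + 1) * w (i - 1))
    (N : Matrix (Fin 2) (Fin 2) ℂ)
    (hN : w 1 * w 0 * Nᵀ = w 0 * w 1 * N) :
    ∀ k, 1 ≤ k →
      w (k - 1) * w k * (if Even (k + 1) then N else Nᵀ) =
        w k * w (k - 1) * (if Even k then N else Nᵀ) := by
  rintro (_ | n) hk
  · omega
  · simpa only [Nat.add_sub_cancel, Nat.even_add_one, ite_not] using
      twist_of_pow_mul_recurrence s w hrec N Nᵀ hN n

theorem stmt1 (s : ℕ → ℕ) (hs : ∀ k, 1 ≤ k → 0 < s k) (hs1 : s 1 = 1)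
    (w : ℕ → Matrix (Fin 2) (Fin 2) ℂ) (hinv : ∀ i, IsUnit (w i).det)
    (hrec : ∀ i, 1 ≤ i → w (i + 1) = w i ^ s (i + 1) * w (i - 1))
    (N : Matrix (Fin 2) (Fin 2) ℂ) (hNinv : IsUnit N.det)
    (hN : w 1 * w 0 * Nᵀ = w 0 * w 1 * N) :
    ∀ k, 1 ≤ k →
      w (k - 1) * w k * (if Even (k + 1) then N else Nᵀ) =
        w k * w (k - 1) * (if Even k then N else Nᵀ) :=
  stmt1_general s w hrec N hN
end

section
/- Let w₀, w₁ ∈ GL(2,ℝ) be matrices of the form [[a,b],[c,d]] with 1 ≤ a ≤ min(b,c) ≤ max(b,c) ≤ d. Let (sₖ) be a sequence of positive integers (s₁ = 1) and define w_{i+1} = wᵢ^{s_{i+1}} w_{i-1}. Then for all k ≥ 1 and 1 ≤ l ≤ s_{k+1}+1, ‖wₖ‖·‖wₖ^{l-1} w_{k-1}‖ ≤ ‖wₖ^l w_{k-1}‖ ≤ 2‖wₖ‖·‖wₖ^{l-1} w_{k-1}‖, where ‖·‖ is the maximum of the absolute values of the entries. -/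
/-!
All matrices involved have entries `[[a, b], [c, d]]` with `1 ≤ a ≤ min b c ≤ max b c ≤ d`, and
this shape is preserved by products, so every `wₖ ^ l * wₖ₋₁` has it. For such matrices the norm
is the bottom-right entry, and `(u * v) 1 1 = u 1 0 * v 0 1 + u 1 1 * v 1 1` where the first
summand lies between `0` and `u 1 1 * v 1 1`.
-/

open Matrix

def matNorm (w : Matrix (Fin 2) (Fin 2) ℝ) : ℝ :=
  max (max |w 0 0| |w 0 1|) (max |w 1 0| |w 1 1|)

def IsSturmianShape {R : Type*} [Lattice R] [One R] (u : Matrix (Fin 2) (Fin 2) R) : Prop :=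
  1 ≤ u 0 0 ∧ u 0 0 ≤ min (u 0 1) (u 1 0) ∧ max (u 0 1) (u 1 0) ≤ u 1 1

namespace IsSturmianShape

variable {R : Type*} [CommRing R] [LinearOrder R] [IsStrictOrderedRing R]
  {u v : Matrix (Fin 2) (Fin 2) R}

theorem mul (hu : IsSturmianShape u) (hv : IsSturmianShape v) : IsSturmianShape (u * v) := by
  obtain ⟨hu₁, hu₂, hu₃⟩ := hu
  obtain ⟨hv₁, hv₂, hv₃⟩ := hv
  simp only [le_min_iff, max_le_iff] at hu₂ hu₃ hv₂ hv₃
  simp only [IsSturmianShape, le_min_iff, max_le_iff, mul_apply, Fin.sum_univ_two]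
  refine ⟨?_, ⟨?_, ?_⟩, ?_, ?_⟩ <;> nlinarith

theorem pow_mul (hu : IsSturmianShape u) (hv : IsSturmianShape v) (n : ℕ) :
    IsSturmianShape (u ^ n * v) := by
  induction n with
  | zero => simpa using hv
  | succ n ih => simpa only [pow_succ', Matrix.mul_assoc] using hu.mul ih

end IsSturmianShape

theorem isSturmianShape_of_rec {R : Type*} [CommRing R] [LinearOrder R] [IsStrictOrderedRing R]
    (s : ℕ → ℕ) (w : ℕ → Matrix (Fin 2) (Fin 2) R)
    (h0 : IsSturmianShape (w 0)) (h1 : IsSturmianShape (w 1))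
    (hrec : ∀ i, 1 ≤ i → w (i + 1) = w i ^ s (i + 1) * w (i - 1)) (k : ℕ) :
    IsSturmianShape (w k) := by
  induction k using Nat.twoStepInduction with
  | zero => exact h0
  | one => exact h1
  | more i hi hi₁ => simpa [hrec (i + 1) (by omega)] using hi₁.pow_mul hi (s (i + 2))

theorem matNorm_eq_of_isSturmianShape {u : Matrix (Fin 2) (Fin 2) ℝ} (hu : IsSturmianShape u) :
    matNorm u = u 1 1 := by
  obtain ⟨h₁, h₂, h₃⟩ := hu
  simp only [le_min_iff, max_le_iff] at h₂ h₃
  rw [matNorm, abs_of_nonneg (by linarith), abs_of_nonneg (by linarith),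
    abs_of_nonneg (by linarith), abs_of_nonneg (by linarith),
    max_eq_right h₃.2, max_eq_right (max_le (by linarith) h₃.1)]

theorem matNorm_mul_bounds {u v : Matrix (Fin 2) (Fin 2) ℝ}
    (hu : IsSturmianShape u) (hv : IsSturmianShape v) :
    matNorm u * matNorm v ≤ matNorm (u * v) ∧ matNorm (u * v) ≤ 2 * (matNorm u * matNorm v) := by
  rw [matNorm_eq_of_isSturmianShape hu, matNorm_eq_of_isSturmianShape hv,
    matNorm_eq_of_isSturmianShape (hu.mul hv)]
  obtain ⟨hu₁, hu₂, hu₃⟩ := hu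
  obtain ⟨hv₁, hv₂, hv₃⟩ := hv
  simp only [le_min_iff, max_le_iff] at hu₂ hu₃ hv₂ hv₃
  simp only [mul_apply, Fin.sum_univ_two]
  constructor <;> nlinarith

theorem stmt4_general (s : ℕ → ℕ)
    (w : ℕ → Matrix (Fin 2) (Fin 2) ℝ)
    (h0a : 1 ≤ w 0 0 0) (h0b : w 0 0 0 ≤ min (w 0 0 1) (w 0 1 0))
    (h0c : max (w 0 0 1) (w 0 1 0) ≤ w 0 1 1)
    (h1a : 1 ≤ w 1 0 0) (h1b : w 1 0 0 ≤ min (w 1 0 1) (w 1 1 0))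
    (h1c : max (w 1 0 1) (w 1 1 0) ≤ w 1 1 1)
    (hrec : ∀ i, 1 ≤ i → w (i + 1) = w i ^ s (i + 1) * w (i - 1)) :
    ∀ k, 1 ≤ k → ∀ l, 1 ≤ l → l ≤ s (k + 1) + 1 →
      matNorm (w k) * matNorm (w k ^ (l - 1) * w (k - 1)) ≤ matNorm (w k ^ l * w (k - 1)) ∧
      matNorm (w k ^ l * w (k - 1)) ≤ 2 * (matNorm (w k) * matNorm (w k ^ (l - 1) * w (k - 1))) := by
  have hw := isSturmianShape_of_rec s w ⟨h0a, h0b, h0c⟩ ⟨h1a, h1b, h1c⟩ hrec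
  intro k _ l hl _
  obtain ⟨m, rfl⟩ : ∃ m, l = m + 1 := ⟨l - 1, by omega⟩
  rw [Nat.add_sub_cancel, pow_succ', Matrix.mul_assoc]
  exact matNorm_mul_bounds (hw k) ((hw k).pow_mul (hw (k - 1)) m)

theorem stmt4 (s : ℕ → ℕ) (hs : ∀ k, 1 ≤ k → 0 < s k) (hs1 : s 1 = 1)
    (w : ℕ → Matrix (Fin 2) (Fin 2) ℝ)
    (hdet0 : (w 0).det ≠ 0) (hdet1 : (w 1).det ≠ 0)
    (h0a : 1 ≤ w 0 0 0) (h0b : w 0 0 0 ≤ min (w 0 0 1) (w 0 1 0))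
    (h0c : max (w 0 0 1) (w 0 1 0) ≤ w 0 1 1)
    (h1a : 1 ≤ w 1 0 0) (h1b : w 1 0 0 ≤ min (w 1 0 1) (w 1 1 0))
    (h1c : max (w 1 0 1) (w 1 1 0) ≤ w 1 1 1)
    (hrec : ∀ i, 1 ≤ i → w (i + 1) = w i ^ s (i + 1) * w (i - 1)) :
    ∀ k, 1 ≤ k → ∀ l, 1 ≤ l → l ≤ s (k + 1) + 1 →
      matNorm (w k) * matNorm (w k ^ (l - 1) * w (k - 1)) ≤ matNorm (w k ^ l * w (k - 1)) ∧
      matNorm (w k ^ l * w (k - 1)) ≤ 2 * (matNorm (w k) * matNorm (w k ^ (l - 1) * w (k - 1))) :=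
  stmt4_general s w h0a h0b h0c h1a h1b h1c hrec
end

section
/- Let (Xₙ)ₙ≥₀ be a sequence of positive reals tending to infinity and (sₙ)ₙ≥₁ a sequence of positive integers such that for some c ≥ 1 and all n ≥ 1, c^{-s_{n+1}} Xₙ^{s_{n+1}} X_{n-1} ≤ X_{n+1} ≤ c^{s_{n+1}} Xₙ^{s_{n+1}} X_{n-1}. Then the sequence (log Xₙ)ₙ is strictly increasing for n sufficiently large. -/
open Filter

lemma lt_of_inv_pow_mul_le {c x y z : ℝ} {k : ℕ} (hk : k ≠ 0) (hc : 0 < c) (hx : c ≤ x)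
    (hy : c < y) (h : (c ^ k)⁻¹ * x ^ k * y ≤ z) : x < z := by
  have hratio : 1 ≤ x / c := (one_le_div hc).2 hx
  have hpow : x / c ≤ (x / c) ^ k := le_self_pow₀ hratio hk
  calc x = x / c * c := (div_mul_cancel₀ x hc.ne').symm
    _ < x / c * y := mul_lt_mul_of_pos_left hy (by positivity)
    _ ≤ (x / c) ^ k * y := mul_le_mul_of_nonneg_right hpow (hc.trans hy).le
    _ = (c ^ k)⁻¹ * x ^ k * y := by rw [div_pow, div_eq_inv_mul]
    _ ≤ z := h

theorem stmt5_general (X : ℕ → ℝ)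
    (hlim : Tendsto X atTop atTop)
    (s : ℕ → ℕ) (hs : ∀ n, 1 ≤ n → 0 < s n) (c : ℝ) (hc : 1 ≤ c)
    (hrec : ∀ n, 1 ≤ n →
      (c ^ s (n + 1))⁻¹ * X n ^ s (n + 1) * X (n - 1) ≤ X (n + 1) ∧
      X (n + 1) ≤ c ^ s (n + 1) * X n ^ s (n + 1) * X (n - 1)) :
    ∃ N : ℕ, ∀ n, N ≤ n → Real.log (X n) < Real.log (X (n + 1)) := by
  obtain ⟨N, hN⟩ := (hlim.eventually_gt_atTop c).exists_forall_of_atTop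
  refine ⟨N + 1, fun n hn => ?_⟩
  have hc0 : 0 < c := one_pos.trans_le hc
  have hXn : c < X n := hN n (by omega)
  have hstep : X n < X (n + 1) :=
    lt_of_inv_pow_mul_le (hs (n + 1) (by omega)).ne' hc0 hXn.le (hN (n - 1) (by omega))
      (hrec n (by omega)).1
  exact Real.log_lt_log (hc0.trans hXn) hstep

theorem stmt5 (X : ℕ → ℝ) (hX : ∀ n, 0 < X n)
    (hlim : Tendsto X atTop atTop)
    (s : ℕ → ℕ) (hs : ∀ n, 1 ≤ n → 0 < s n) (c : ℝ) (hc : 1 ≤ c)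
    (hrec : ∀ n, 1 ≤ n →
      (c ^ s (n + 1))⁻¹ * X n ^ s (n + 1) * X (n - 1) ≤ X (n + 1) ∧
      X (n + 1) ≤ c ^ s (n + 1) * X n ^ s (n + 1) * X (n - 1)) :
    ∃ N : ℕ, ∀ n, N ≤ n → Real.log (X n) < Real.log (X (n + 1)) :=
  stmt5_general X hlim s hs c hc hrec
end

section
/- Let (Xₙ)ₙ≥₀ be a sequence of positive reals tending to infinity and (sₙ)ₙ≥₁ positive integers such that for some c ≥ 1, c^{-s_{n+1}} Xₙ^{s_{n+1}} X_{n-1} ≤ X_{n+1} ≤ c^{s_{n+1}} Xₙ^{s_{n+1}} X_{n-1} for all n ≥ 1. Then there exists λ > 1 and C > 0 such that log(Xₙ) ≥ C·λⁿ for all n sufficiently large; in particular the series ∑ₙ 1/log(Xₙ) converges, and moreover ∑_{k≥n} 1/log(Xₖ) ≍ 1/log(Xₙ) as n → ∞ (the ratio is bounded above and below by positive constants). -/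
open Filter

theorem stmt7 (X : ℕ → ℝ) (hX : ∀ n, 0 < X n)
    (hlim : Tendsto X atTop atTop)
    (s : ℕ → ℕ) (hs : ∀ n, 1 ≤ n → 0 < s n) (c : ℝ) (hc : 1 ≤ c)
    (hrec : ∀ n, 1 ≤ n →
      (c ^ s (n + 1))⁻¹ * X n ^ s (n + 1) * X (n - 1) ≤ X (n + 1) ∧
      X (n + 1) ≤ c ^ s (n + 1) * X n ^ s (n + 1) * X (n - 1)) :
    (∃ lam C : ℝ, 1 < lam ∧ 0 < C ∧
        ∀ᶠ n in atTop, C * lam ^ n ≤ Real.log (X n)) ∧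
    Summable (fun n => 1 / Real.log (X n)) ∧
    ∃ c₁ c₂ : ℝ, 0 < c₁ ∧ 0 < c₂ ∧
      ∀ᶠ n in atTop,
        c₁ * (1 / Real.log (X n)) ≤ ∑' k : ℕ, 1 / Real.log (X (n + k)) ∧
        ∑' k : ℕ, 1 / Real.log (X (n + k)) ≤ c₂ * (1 / Real.log (X n)) := by
  set L : ℕ → ℝ := fun n => Real.log (X n) with hL
  have hcpos : (0:ℝ) < c := lt_of_lt_of_le one_pos hc
  have hlogc : 0 ≤ Real.log c := Real.log_nonneg hc
  -- N₀ : threshold where L n ≥ 2 log c + 2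
  obtain ⟨N₀, hN₀⟩ : ∃ N₀, ∀ n, N₀ ≤ n → 2 * Real.log c + 2 ≤ L n := by
    have := (Real.tendsto_log_atTop.comp hlim).eventually_ge_atTop (2 * Real.log c + 2)
    exact eventually_atTop.mp this
  set N : ℕ := N₀ + 1 with hN
  have hpos : ∀ n, N₀ ≤ n → (2:ℝ) ≤ L n := fun n hn => by
    have := hN₀ n hn; nlinarith
  have hposN : ∀ n, N ≤ n → (0:ℝ) < L n := fun n hn => by
    have := hpos n (by omega); linarith
  -- basic recurrence consequence
  have hA : ∀ n, N₀ ≤ n → (1/2) * L (n+1) + L n ≤ L (n+2) := by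
    intro n hn
    obtain ⟨h1, -⟩ := hrec (n+1) (by omega)
    have hs1 : (1:ℝ) ≤ (s (n+2) : ℝ) := by
      exact_mod_cast hs (n+2) (by omega)
    have h1' : (c ^ s (n+2))⁻¹ * X (n+1) ^ s (n+2) * X n ≤ X (n+2) := by
      simpa using h1
    have hXp1 := hX (n+1); have hXp0 := hX n
    have hlog : Real.log ((c ^ s (n+2))⁻¹ * X (n+1) ^ s (n+2) * X n) ≤ L (n+2) :=
      Real.log_le_log (by positivity) h1'
    have heq : Real.log ((c ^ s (n+2))⁻¹ * X (n+1) ^ s (n+2) * X n)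
        = -((s (n+2) : ℝ) * Real.log c) + (s (n+2) : ℝ) * L (n+1) + L n := by
      rw [Real.log_mul (by positivity) (by positivity),
        Real.log_mul (by positivity) (by positivity),
        Real.log_inv, Real.log_pow, Real.log_pow]
    rw [heq] at hlog
    have hLn1 := hN₀ (n+1) (by omega)
    nlinarith [mul_le_mul_of_nonneg_left (show Real.log c ≤ (1/2) * L (n+1) by linarith)
      (show (0:ℝ) ≤ (s (n+2):ℝ) by linarith)]
  -- one-step bound
  have hE : ∀ n, N ≤ n → (1/2) * L n ≤ L (n+1) := by
    intro n hn
    obtain ⟨m, rfl⟩ : ∃ m, n = m + 1 := ⟨n - 1, by omega⟩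
    have := hA m (by omega)
    have := hpos m (by omega)
    linarith
  -- two-step growth
  have hD : ∀ n, N ≤ n → (5/4) * L n ≤ L (n+2) := by
    intro n hn
    have h1 := hA n (by omega)
    have h2 := hE n hn
    linarith [hposN n hn]
  -- geometric growth along even steps
  have hgrow : ∀ n, N ≤ n → ∀ k : ℕ, (5/4:ℝ)^k * L n ≤ L (n + 2*k) := by
    intro n hn k
    induction k with
    | zero => simp
    | succ k ih =>
      have h2 : (5/4:ℝ) * L (n + 2*k) ≤ L ((n + 2*k) + 2) := hD (n + 2*k) (by omega)
      have : (n + 2*k) + 2 = n + 2*(k+1) := by ring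
      rw [this] at h2
      have h3 : (5/4:ℝ)^(k+1) * L n = (5/4) * ((5/4)^k * L n) := by ring
      rw [h3]
      have h4 : (5/4:ℝ) * ((5/4)^k * L n) ≤ (5/4) * L (n + 2*k) := by nlinarith
      linarith
  have hgrow' : ∀ n, N ≤ n → ∀ k : ℕ, (5/4:ℝ)^k * L (n+1) ≤ L (n + (2*k+1)) := by
    intro n hn k
    have := hgrow (n+1) (by omega) k
    have he : (n+1) + 2*k = n + (2*k+1) := by ring
    rwa [he] at this
  -- Part 1 data
  set lam : ℝ := Real.sqrt (5/4) with hlam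
  have lam_sq : lam ^ 2 = 5/4 := Real.sq_sqrt (by norm_num)
  have one_lt_lam : 1 < lam := by
    rw [hlam]
    rw [show (1:ℝ) = √1 by simp]
    exact Real.sqrt_lt_sqrt (by norm_num) (by norm_num)
  have lam_pos : 0 < lam := lt_trans one_pos one_lt_lam
  set C : ℝ := min (L N / lam ^ N) (L (N+1) / lam ^ (N+1)) with hC
  have hCpos : 0 < C := by
    apply lt_min <;> apply div_pos
    · exact hposN N le_rfl
    · positivity
    · exact hposN (N+1) (by omega)
    · positivity
  have main : ∀ m, N ≤ m → C * lam ^ m ≤ L m := by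
    intro m hm
    rcases Nat.even_or_odd (m - N) with ⟨k, hk⟩ | ⟨k, hk⟩
    · have hmk : m = N + 2*k := by omega
      have hg := hgrow N le_rfl k
      have h1 : lam ^ m = lam ^ N * (5/4)^k := by
        rw [hmk, pow_add, pow_mul, lam_sq]
      calc C * lam ^ m ≤ (L N / lam ^ N) * lam ^ m := by
            apply mul_le_mul_of_nonneg_right (min_le_left _ _) (by positivity)
        _ = (5/4)^k * L N := by
            rw [h1]; field_simp
        _ ≤ L (N + 2*k) := hg
        _ = L m := by rw [hmk]
    · have hmk : m = (N+1) + 2*k := by omega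
      have hg := hgrow (N+1) (by omega) k
      have h1 : lam ^ m = lam ^ (N+1) * (5/4)^k := by
        rw [hmk, pow_add, pow_mul, lam_sq]
      calc C * lam ^ m ≤ (L (N+1) / lam ^ (N+1)) * lam ^ m := by
            apply mul_le_mul_of_nonneg_right (min_le_right _ _) (by positivity)
        _ = (5/4)^k * L (N+1) := by
            rw [h1]; field_simp
        _ ≤ L ((N+1) + 2*k) := hg
        _ = L m := by rw [hmk]
  have hsum2 : Summable (fun n => 1 / L n) := by
    have hil : lam⁻¹ < 1 := inv_lt_one_of_one_lt₀ one_lt_lam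
    have hgeo : Summable (fun n : ℕ => C⁻¹ * (lam⁻¹)^n) :=
      (summable_geometric_of_lt_one (by positivity) hil).mul_left _
    rw [← summable_nat_add_iff N]
    apply Summable.of_nonneg_of_le
    · intro n
      have := hposN (n + N) (by omega)
      positivity
    · intro n
      have h1 : C * lam ^ (n + N) ≤ L (n + N) := main (n + N) (by omega)
      have h2 : 0 < C * lam ^ (n + N) := by positivity
      have h3 : (1:ℝ) / L (n + N) ≤ 1 / (C * lam ^ (n + N)) := by
        apply one_div_le_one_div_of_le h2 h1
      have h4 : (1:ℝ) / (C * lam ^ (n + N)) = C⁻¹ * (lam⁻¹)^(n+N) := by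
        rw [one_div, mul_inv, inv_pow]
      have h5 : (lam⁻¹:ℝ)^(n+N) ≤ (lam⁻¹)^n :=
        pow_le_pow_of_le_one (by positivity) (le_of_lt hil) (by omega)
      calc (1:ℝ) / L (n + N) ≤ C⁻¹ * (lam⁻¹)^(n+N) := by rw [← h4]; exact h3
        _ ≤ C⁻¹ * (lam⁻¹)^n := by
            apply mul_le_mul_of_nonneg_left h5 (by positivity)
    · exact hgeo
  refine ⟨⟨lam, C, one_lt_lam, hCpos, eventually_atTop.mpr ⟨N, main⟩⟩, hsum2, ?_⟩
  -- Part 3 : tail comparison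
  refine ⟨1, 15, one_pos, by norm_num, eventually_atTop.mpr ⟨N, ?_⟩⟩
  intro n hn
  have hLn : 0 < L n := hposN n hn
  have hLn0 : L n ≠ 0 := ne_of_gt hLn
  have hfpos : ∀ k : ℕ, 0 ≤ 1 / L (n + k) := by
    intro k
    have := hposN (n + k) (by omega)
    positivity
  have hfs : Summable (fun k => 1 / L (n + k)) := by
    have := (summable_nat_add_iff (f := fun m => 1 / L m) n).2 hsum2
    simpa [add_comm] using this
  have hgeo45 : Summable (fun j : ℕ => ((4:ℝ)/5)^j) :=
    summable_geometric_of_lt_one (by norm_num) (by norm_num)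
  have hpow : ∀ j : ℕ, ((4:ℝ)/5)^j = ((5/4:ℝ)^j)⁻¹ := by
    intro j; rw [← inv_pow]; norm_num
  have heb : ∀ j : ℕ, 1 / L (n + 2*j) ≤ (1 / L n) * (4/5)^j := by
    intro j
    have hg := hgrow n hn j
    have hp : (0:ℝ) < (5/4)^j * L n := by positivity
    have h1 := one_div_le_one_div_of_le hp hg
    calc 1 / L (n + 2*j) ≤ 1 / ((5/4)^j * L n) := h1
      _ = (1 / L n) * (4/5)^j := by
          rw [hpow]; field_simp
  have hob : ∀ j : ℕ, 1 / L (n + (2*j+1)) ≤ (2 / L n) * (4/5)^j := by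
    intro j
    have hg := hgrow' n hn j
    have hEn := hE n hn
    have hg2 : (5/4:ℝ)^j * ((1/2) * L n) ≤ L (n + (2*j+1)) := by
      calc (5/4:ℝ)^j * ((1/2) * L n) ≤ (5/4)^j * L (n+1) := by
            apply mul_le_mul_of_nonneg_left hEn (by positivity)
        _ ≤ L (n + (2*j+1)) := hg
    have hp : (0:ℝ) < (5/4:ℝ)^j * ((1/2) * L n) := by positivity
    have h1 := one_div_le_one_div_of_le hp hg2
    calc 1 / L (n + (2*j+1)) ≤ 1 / ((5/4:ℝ)^j * ((1/2) * L n)) := h1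
      _ = (2 / L n) * (4/5)^j := by
          rw [hpow]; field_simp
  have hse : Summable (fun j : ℕ => 1 / L (n + 2*j)) :=
    Summable.of_nonneg_of_le (fun j => hfpos (2*j)) heb (hgeo45.mul_left _)
  have hso : Summable (fun j : ℕ => 1 / L (n + (2*j+1))) :=
    Summable.of_nonneg_of_le (fun j => hfpos (2*j+1)) hob (hgeo45.mul_left _)
  have hsplit : (∑' j : ℕ, 1 / L (n + 2*j)) + (∑' j : ℕ, 1 / L (n + (2*j+1)))
      = ∑' k : ℕ, 1 / L (n + k) := by
    exact tsum_even_add_odd (f := fun k => 1 / L (n + k)) hse hso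
  have te : (∑' j : ℕ, 1 / L (n + 2*j)) ≤ (1 / L n) * 5 := by
    calc (∑' j : ℕ, 1 / L (n + 2*j)) ≤ ∑' j : ℕ, (1 / L n) * (4/5)^j :=
          Summable.tsum_le_tsum heb hse (hgeo45.mul_left _)
      _ = (1 / L n) * 5 := by
          rw [tsum_mul_left, tsum_geometric_of_lt_one (by norm_num) (by norm_num)]
          norm_num
  have tod : (∑' j : ℕ, 1 / L (n + (2*j+1))) ≤ (2 / L n) * 5 := by
    calc (∑' j : ℕ, 1 / L (n + (2*j+1))) ≤ ∑' j : ℕ, (2 / L n) * (4/5)^j :=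
          Summable.tsum_le_tsum hob hso (hgeo45.mul_left _)
      _ = (2 / L n) * 5 := by
          rw [tsum_mul_left, tsum_geometric_of_lt_one (by norm_num) (by norm_num)]
          norm_num
  constructor
  · have h0 := Summable.le_tsum hfs 0 (fun j _ => hfpos j)
    simpa using h0
  · rw [← hsplit]
    have : (2:ℝ) / L n = 2 * (1 / L n) := by ring
    nlinarith [hfpos 0]
end

section
/- For all vectors x, y, z ∈ ℝ³, one has ‖y‖·‖x ∧ z‖ ≤ ‖z‖·‖x ∧ y‖ + 2‖x‖·‖y ∧ z‖, where ∧ denotes the cross product and ‖·‖ the Euclidean norm. -/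
/-!
Expanding `y × (y × z) = ⟪y, z⟫ y - ‖y‖² z` and crossing with `x` gives
`‖y‖² (x × z) = ⟪y, z⟫ (x × y) - x × (y × (y × z))`. The triangle inequality, Cauchy–Schwarz and
`‖a × b‖ ≤ ‖a‖ ‖b‖` then bound `‖y‖² ‖x × z‖` by `‖y‖ (‖z‖ ‖x × y‖ + ‖x‖ ‖y × z‖)`, which is the
claim even with constant `1` in place of `2`.
-/

/-- The cross product on `ℝ³` viewed as Euclidean space. -/
noncomputable def cross3 (x y : EuclideanSpace ℝ (Fin 3)) : EuclideanSpace ℝ (Fin 3) :=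
  (WithLp.equiv 2 (Fin 3 → ℝ)).symm
    ![x 1 * y 2 - x 2 * y 1, x 2 * y 0 - x 0 * y 2, x 0 * y 1 - x 1 * y 0]

open Matrix WithLp InnerProductGeometry
open scoped RealInnerProductSpace

section Cross3

variable (x y z : EuclideanSpace ℝ (Fin 3))

lemma cross3_eq_toLp_crossProduct : cross3 x y = toLp 2 (ofLp x ⨯₃ ofLp y) := by
  ext i
  fin_cases i <;> simp [cross3, cross_apply]

lemma cross3_sub_right : cross3 x (y - z) = cross3 x y - cross3 x z := by
  simp only [cross3_eq_toLp_crossProduct, ofLp_sub, map_sub, toLp_sub]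

lemma cross3_smul_right (c : ℝ) : cross3 x (c • y) = c • cross3 x y := by
  simp only [cross3_eq_toLp_crossProduct, ofLp_smul, map_smul, toLp_smul]

lemma norm_cross3_le : ‖cross3 x y‖ ≤ ‖x‖ * ‖y‖ := by
  rw [cross3_eq_toLp_crossProduct, norm_ofLp_crossProduct]
  exact mul_le_of_le_one_right (by positivity) (Real.sin_le_one _)

lemma cross3_cross3 : cross3 x (cross3 y z) = ⟪x, z⟫ • y - ⟪x, y⟫ • z := by
  simp only [cross3_eq_toLp_crossProduct, cross_cross_eq_smul_sub_smul',
    EuclideanSpace.inner_eq_star_dotProduct, star_trivial, toLp_sub, toLp_smul, toLp_ofLp,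
    dotProduct_comm (ofLp y) (ofLp x), dotProduct_comm (ofLp z) (ofLp x)]

lemma norm_sq_smul_cross3 :
    ‖y‖ ^ 2 • cross3 x z = ⟪y, z⟫ • cross3 x y - cross3 x (cross3 y (cross3 y z)) := by
  rw [cross3_cross3 y y z, cross3_sub_right, cross3_smul_right, cross3_smul_right,
    real_inner_self_eq_norm_sq, sub_sub_cancel]

lemma norm_mul_norm_cross3_le :
    ‖y‖ * ‖cross3 x z‖ ≤ ‖z‖ * ‖cross3 x y‖ + ‖x‖ * ‖cross3 y z‖ := by
  have hmul : ‖y‖ * (‖y‖ * ‖cross3 x z‖) ≤ ‖y‖ * (‖z‖ * ‖cross3 x y‖ + ‖x‖ * ‖cross3 y z‖) :=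
    calc ‖y‖ * (‖y‖ * ‖cross3 x z‖) = ‖‖y‖ ^ 2 • cross3 x z‖ := by
          rw [norm_smul, Real.norm_of_nonneg (by positivity)]; ring
      _ ≤ ‖⟪y, z⟫ • cross3 x y‖ + ‖cross3 x (cross3 y (cross3 y z))‖ := by
          rw [norm_sq_smul_cross3]; exact norm_sub_le _ _
      _ ≤ ‖y‖ * ‖z‖ * ‖cross3 x y‖ + ‖x‖ * (‖y‖ * ‖cross3 y z‖) := by
          rw [norm_smul, Real.norm_eq_abs]
          gcongr
          · exact abs_real_inner_le_norm y z
          · exact (norm_cross3_le _ _).trans (by gcongr; exact norm_cross3_le _ _)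
      _ = ‖y‖ * (‖z‖ * ‖cross3 x y‖ + ‖x‖ * ‖cross3 y z‖) := by ring
  rcases (norm_nonneg y).eq_or_lt with hy | hy
  · rw [← hy, zero_mul]
    positivity
  · exact le_of_mul_le_mul_left hmul hy

end Cross3

theorem stmt9 (x y z : EuclideanSpace ℝ (Fin 3)) :
    ‖y‖ * ‖cross3 x z‖ ≤ ‖z‖ * ‖cross3 x y‖ + 2 * ‖x‖ * ‖cross3 y z‖ := by
  have h := norm_mul_norm_cross3_le x y z
  have : 0 ≤ ‖x‖ * ‖cross3 y z‖ := by positivity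
  linarith
end

section
/- Let (sₖ)ₖ≥₁ be a sequence of positive integers with s₁ = 1, let (Wₖ)ₖ≥₀ be a ψ-Sturmian sequence of real numbers with multiplicative-growth-type bounds, i.e. Wₖ > 0, Wₖ → ∞, and there is c ≥ 1 with c^{-s_{k+1}} Wₖ^{s_{k+1}} W_{k-1} ≤ W_{k+1} ≤ c^{s_{k+1}} Wₖ^{s_{k+1}} W_{k-1} for k ≥ 1. Let (Dₖ)ₖ≥₀ be a sequence of reals ≥ 1 satisfying exactly D_{k+1} = Dₖ^{s_{k+1}} D_{k-1} for all k ≥ 1. Then there exists δ ≥ 0 and C > 0 such that C⁻¹ Wₖ^δ ≤ Dₖ ≤ C Wₖ^δ for all k, i.e. log Dₖ = δ log Wₖ + O(1). -/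
open Filter

open Topology

noncomputable def alS (s : ℕ → ℕ) : ℕ → ℝ
  | 0 => 0
  | 1 => 1
  | (k+2) => (s (k+2) : ℝ) * alS s (k+1) + alS s k

lemma alS_rec (s : ℕ → ℕ) (k : ℕ) :
    alS s (k+2) = (s (k+2) : ℝ) * alS s (k+1) + alS s k := by
  rfl

section
variable (s : ℕ → ℕ) (hs' : ∀ k, (1:ℝ) ≤ (s (k+2) : ℝ))

include hs'

lemma alS_base : ∀ k, 0 ≤ alS s k ∧ 1 ≤ alS s (k+1) := by
  intro k
  induction k with
  | zero => simp [alS]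
  | succ k ih =>
    obtain ⟨h0, h1⟩ := ih
    refine ⟨by linarith, ?_⟩
    rw [alS_rec]
    nlinarith [hs' k]

lemma alS_nonneg (k : ℕ) : 0 ≤ alS s k := (alS_base s hs' k).1

lemma alS_one_le (k : ℕ) : 1 ≤ alS s (k+1) := (alS_base s hs' k).2

lemma alS_pos (k : ℕ) : 0 < alS s (k+1) := lt_of_lt_of_le one_pos (alS_one_le s hs' k)

lemma alS_mono (k : ℕ) : alS s k ≤ alS s (k+1) := by
  cases k with
  | zero => simp [alS]
  | succ k =>
    rw [alS_rec]
    nlinarith [hs' k, alS_nonneg s hs' k, alS_one_le s hs' k]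

lemma alS_double (k : ℕ) : 2 * alS s (k+1) ≤ alS s (k+3) := by
  have h1 := alS_one_le s hs' k
  have h2 := alS_mono s hs' (k+1)
  have h3 := hs' (k+1)
  have h4 := alS_pos s hs' (k+1)
  rw [alS_rec]
  nlinarith

lemma alS_lin : ∀ n : ℕ, (n:ℝ) ≤ 2 * alS s n + 2 := by
  intro n
  induction n using Nat.strong_induction_on with
  | _ n ih =>
    match n with
    | 0 => simp [alS]
    | 1 => norm_num [alS]
    | (n+2) =>
      have h := ih n (by omega)
      have h1 := alS_one_le s hs' n
      have h3 := hs' n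
      have h4 : alS s n + 1 ≤ alS s (n+2) := by rw [alS_rec]; nlinarith
      push_cast
      nlinarith

lemma alS_sum : ∀ n k, (∑ j ∈ Finset.range n, (alS s (k+1+j))⁻¹)
    ≤ 2 * (alS s (k+1))⁻¹ + 2 * (alS s (k+2))⁻¹ := by
  intro n
  induction n using Nat.strong_induction_on with
  | _ n ih =>
    match n with
    | 0 =>
      intro k
      simp only [Finset.range_zero, Finset.sum_empty]
      have h1 := inv_nonneg.2 (alS_pos s hs' k).le
      have h2 := inv_nonneg.2 (alS_pos s hs' (k+1)).le
      linarith
    | 1 =>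
      intro k
      simp only [Finset.range_one, Finset.sum_singleton, Nat.add_zero]
      have h1 := inv_nonneg.2 (alS_pos s hs' k).le
      have h2 := inv_nonneg.2 (alS_pos s hs' (k+1)).le
      linarith
    | (n+2) =>
      intro k
      rw [Finset.sum_range_succ' _ (n+1), Finset.sum_range_succ' _ n]
      have hre : ∀ j, (alS s (k+1+(j+1+1)))⁻¹ = (alS s ((k+2)+1+j))⁻¹ := by
        intro j
        have : k+1+(j+1+1) = (k+2)+1+j := by omega
        rw [this]
      rw [Finset.sum_congr rfl (fun j _ => hre j)]
      have hih := ih n (by omega) (k+2)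
      have hd1 : (alS s (k+3))⁻¹ ≤ (alS s (k+1))⁻¹ / 2 := by
        rw [div_eq_inv_mul, ← mul_inv]
        exact inv_anti₀ (by linarith [alS_pos s hs' k]) (alS_double s hs' k)
      have hd2 : (alS s (k+4))⁻¹ ≤ (alS s (k+2))⁻¹ / 2 := by
        rw [div_eq_inv_mul, ← mul_inv]
        exact inv_anti₀ (by linarith [alS_pos s hs' (k+1)]) (alS_double s hs' (k+1))
      have e1 : k+1+(0+1) = k+2 := by omega
      have e2 : k+1+0 = k+1 := by omega
      rw [e1, e2]
      linarith [hd1, hd2, hih]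

end

section Key
variable (s : ℕ → ℕ)

lemma key_approx (hs' : ∀ k, (1:ℝ) ≤ (s (k+2) : ℝ)) (v : ℕ → ℝ) (L : ℝ) (hL : 0 ≤ L)
    (hv : ∀ k, |v (k+2) - (s (k+2) : ℝ) * v (k+1) - v k| ≤ (s (k+2) : ℝ) * L) :
    ∃ γ : ℝ, Tendsto (fun k => v (k+1) / alS s (k+1)) atTop (𝓝 γ) ∧
      ∀ k, |v (k+1) - γ * alS s (k+1)| ≤ 4 * (|v 0| + 2 * L) := by
  set M : ℝ := |v 0| + 2 * L with hMdef
  have hM0 : 0 ≤ M := by positivity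
  set X : ℕ → ℝ := fun k => v (k+1) * alS s k - v k * alS s (k+1) with hXdef
  -- step 1
  have hX1 : ∀ k, |X k| ≤ |v 0| + L * (alS s (k+1) + alS s k) := by
    intro k
    induction k with
    | zero =>
      have : X 0 = -(v 0) := by simp [hXdef, alS]
      rw [this, abs_neg]
      simp [alS]
      nlinarith
    | succ k ih =>
      have hid : X (k+1) = (v (k+2) - (s (k+2) : ℝ) * v (k+1) - v k) * alS s (k+1) - X k := by
        simp only [hXdef, alS_rec]
        ring
      have hα := alS_nonneg s hs' (k+1)
      have htri : |X (k+1)| ≤ |v (k+2) - (s (k+2) : ℝ) * v (k+1) - v k| * alS s (k+1) + |X k| := by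
        rw [hid]
        calc |(v (k+2) - (s (k+2) : ℝ) * v (k+1) - v k) * alS s (k+1) - X k|
            ≤ |(v (k+2) - (s (k+2) : ℝ) * v (k+1) - v k) * alS s (k+1)| + |X k| := abs_sub _ _
          _ = |v (k+2) - (s (k+2) : ℝ) * v (k+1) - v k| * alS s (k+1) + |X k| := by
              rw [abs_mul, abs_of_nonneg hα]
      have hε := hv k
      have hs2 := hs' k
      have hrec := alS_rec s (k+1)
      have h2 : |v (k+2) - (s (k+2) : ℝ) * v (k+1) - v k| * alS s (k+1)
          ≤ (s (k+2) : ℝ) * L * alS s (k+1) := by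
        apply mul_le_mul_of_nonneg_right hε hα
      rw [alS_rec]
      nlinarith
  -- step 2
  have hX2 : ∀ k, |X k| ≤ M * alS s (k+1) := by
    intro k
    have h1 := hX1 k
    have h2 := alS_mono s hs' k
    have h3 := alS_one_le s hs' k
    have hv0 : |v 0| ≤ |v 0| * alS s (k+1) := le_mul_of_one_le_right (abs_nonneg _) h3
    nlinarith [abs_nonneg (v 0), alS_nonneg s hs' k]
  set r : ℕ → ℝ := fun k => v (k+1) / alS s (k+1) with hrdef
  have hrstep : ∀ k, |r (k+1) - r k| ≤ M * (alS s (k+1))⁻¹ := by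
    intro k
    have p1 := alS_pos s hs' k
    have p2 := alS_pos s hs' (k+1)
    have hid : r (k+1) - r k = X (k+1) / (alS s (k+1) * alS s (k+2)) := by
      simp only [hrdef, hXdef]
      field_simp
    rw [hid, abs_div, abs_of_pos (by positivity : (0:ℝ) < alS s (k+1) * alS s (k+2)),
      div_le_iff₀ (by positivity)]
    calc |X (k+1)| ≤ M * alS s (k+2) := hX2 (k+1)
      _ = M * (alS s (k+1))⁻¹ * (alS s (k+1) * alS s (k+2)) := by field_simp
  have hrtele : ∀ k n, |r (k+n) - r k| ≤ M * ∑ j ∈ Finset.range n, (alS s (k+1+j))⁻¹ := by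
    intro k n
    induction n with
    | zero => simp
    | succ n ih =>
      rw [Finset.sum_range_succ, mul_add]
      have h1 := hrstep (k+n)
      have e : k + (n+1) = (k+n) + 1 := by omega
      rw [e]
      have e3 : (alS s (k+n+1))⁻¹ = (alS s (k+1+n))⁻¹ := by
        rw [show k+n+1 = k+1+n from by omega]
      rw [e3] at h1
      have habs := abs_sub_le (r (k+n+1)) (r (k+n)) (r k)
      linarith
  have hrbound : ∀ k n, |r (k+n) - r k| ≤ 4 * M * (alS s (k+1))⁻¹ := by
    intro k n
    have h1 := hrtele k n
    have h2 := alS_sum s hs' n k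
    have h3 : (alS s (k+2))⁻¹ ≤ (alS s (k+1))⁻¹ :=
      inv_anti₀ (alS_pos s hs' k) (alS_mono s hs' (k+1))
    have h4 : M * ∑ j ∈ Finset.range n, (alS s (k+1+j))⁻¹ ≤ M * (4 * (alS s (k+1))⁻¹) := by
      apply mul_le_mul_of_nonneg_left _ hM0
      linarith
    calc |r (k+n) - r k| ≤ M * ∑ j ∈ Finset.range n, (alS s (k+1+j))⁻¹ := h1
      _ ≤ M * (4 * (alS s (k+1))⁻¹) := h4
      _ = 4 * M * (alS s (k+1))⁻¹ := by ring
  -- Cauchy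
  have halimtop : Tendsto (fun n => alS s (n+1)) atTop atTop := by
    apply tendsto_atTop_mono (fun n => ?_) (tendsto_atTop_add_const_right atTop (-(3:ℝ)/2)
      ((tendsto_natCast_atTop_atTop (R := ℝ)).atTop_div_const (by norm_num : (0:ℝ) < 2)))
    have := alS_lin s hs' (n+1)
    push_cast at this ⊢
    linarith
  have hbz : Tendsto (fun N : ℕ => 8 * M * (alS s (N+1))⁻¹) atTop (𝓝 0) := by
    have : Tendsto (fun N : ℕ => (alS s (N+1))⁻¹) atTop (𝓝 0) :=
      tendsto_inv_atTop_zero.comp halimtop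
    simpa using this.const_mul (8 * M)
  have hcauchy : CauchySeq r := by
    apply cauchySeq_of_le_tendsto_0 (fun N => 8 * M * (alS s (N+1))⁻¹) _ hbz
    intro n m N hn hm
    have h1 := hrbound N (n - N)
    have h2 := hrbound N (m - N)
    rw [Nat.add_sub_cancel' hn] at h1
    rw [Nat.add_sub_cancel' hm] at h2
    rw [Real.dist_eq]
    calc |r n - r m| ≤ |r n - r N| + |r N - r m| := abs_sub_le _ _ _
      _ ≤ 4 * M * (alS s (N+1))⁻¹ + 4 * M * (alS s (N+1))⁻¹ := by
          rw [abs_sub_comm (r N) (r m)]; linarith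
      _ = 8 * M * (alS s (N+1))⁻¹ := by ring
  obtain ⟨γ, hγ⟩ := cauchySeq_tendsto_of_complete hcauchy
  refine ⟨γ, hγ, fun k => ?_⟩
  have p1 := alS_pos s hs' k
  have hlim : Tendsto (fun m => |r k - r (k + m)|) atTop (𝓝 |r k - γ|) := by
    have : Tendsto (fun m => r (k + m)) atTop (𝓝 γ) :=
      hγ.comp (tendsto_atTop_atTop_of_monotone (fun a b h => by omega) (fun b => ⟨b, by omega⟩))
    exact (tendsto_const_nhds.sub this).abs
  have hdist : |r k - γ| ≤ 4 * M * (alS s (k+1))⁻¹ := by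
    apply le_of_tendsto hlim
    filter_upwards with m
    rw [abs_sub_comm]
    exact hrbound k m
  have hid : v (k+1) - γ * alS s (k+1) = (r k - γ) * alS s (k+1) := by
    simp only [hrdef]
    field_simp
  rw [hid, abs_mul, abs_of_pos p1]
  calc |r k - γ| * alS s (k+1) ≤ 4 * M * (alS s (k+1))⁻¹ * alS s (k+1) :=
        mul_le_mul_of_nonneg_right hdist p1.le
    _ = 4 * M := by field_simp

end Key

theorem stmt12 (s : ℕ → ℕ) (hs : ∀ k, 1 ≤ k → 0 < s k) (hs1 : s 1 = 1)
    (W : ℕ → ℝ) (hW : ∀ k, 0 < W k) (hWlim : Tendsto W atTop atTop)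
    (c : ℝ) (hc : 1 ≤ c)
    (hWrec : ∀ k, 1 ≤ k →
      (c ^ s (k + 1))⁻¹ * W k ^ s (k + 1) * W (k - 1) ≤ W (k + 1) ∧
      W (k + 1) ≤ c ^ s (k + 1) * W k ^ s (k + 1) * W (k - 1))
    (D : ℕ → ℝ) (hD : ∀ k, 1 ≤ D k)
    (hDrec : ∀ k, 1 ≤ k → D (k + 1) = D k ^ s (k + 1) * D (k - 1)) :
    ∃ δ : ℝ, 0 ≤ δ ∧ ∃ C : ℝ, 0 < C ∧
      ∀ k, C⁻¹ * W k ^ δ ≤ D k ∧ D k ≤ C * W k ^ δ := by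
  have hc0 : (0:ℝ) < c := lt_of_lt_of_le one_pos hc
  set L : ℝ := Real.log c with hLdef
  have hL0 : 0 ≤ L := Real.log_nonneg hc
  have hs' : ∀ k, (1:ℝ) ≤ (s (k+2) : ℝ) := by
    intro k
    exact_mod_cast hs (k+2) (by omega)
  set w : ℕ → ℝ := fun k => Real.log (W k) with hwdef
  set d : ℕ → ℝ := fun k => Real.log (D k) with hddef
  have hDpos : ∀ k, (0:ℝ) < D k := fun k => lt_of_lt_of_le one_pos (hD k)
  have hd0 : ∀ k, 0 ≤ d k := fun k => Real.log_nonneg (hD k)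
  -- recurrences in log form
  have hwrec : ∀ k, |w (k+2) - (s (k+2) : ℝ) * w (k+1) - w k| ≤ (s (k+2) : ℝ) * L := by
    intro k
    obtain ⟨hlo, hhi⟩ := hWrec (k+1) (by omega)
    simp only [Nat.add_sub_cancel] at hlo hhi
    have hup : w (k+2) ≤ (s (k+2) : ℝ) * L + (s (k+2) : ℝ) * w (k+1) + w k := by
      have := Real.log_le_log (hW (k+2)) hhi
      rw [Real.log_mul (mul_ne_zero (pow_ne_zero _ hc0.ne') (pow_ne_zero _ (hW (k+1)).ne')) (hW k).ne',
        Real.log_mul (pow_ne_zero _ hc0.ne') (pow_ne_zero _ (hW (k+1)).ne'),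
        Real.log_pow, Real.log_pow] at this
      simp only [hwdef]
      push_cast at this ⊢
      linarith [this]
    have hdn : -((s (k+2) : ℝ) * L) + (s (k+2) : ℝ) * w (k+1) + w k ≤ w (k+2) := by
      have := Real.log_le_log
        (mul_pos (mul_pos (inv_pos.2 (pow_pos hc0 _)) (pow_pos (hW (k+1)) _)) (hW k)) hlo
      rw [Real.log_mul (mul_ne_zero (inv_ne_zero (pow_ne_zero _ hc0.ne')) (pow_ne_zero _ (hW (k+1)).ne')) (hW k).ne',
        Real.log_mul (inv_ne_zero (pow_ne_zero _ hc0.ne')) (pow_ne_zero _ (hW (k+1)).ne'),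
        Real.log_inv, Real.log_pow, Real.log_pow] at this
      simp only [hwdef]
      push_cast at this ⊢
      linarith [this]
    rw [abs_le]
    constructor <;> linarith
  have hdrec : ∀ k, |d (k+2) - (s (k+2) : ℝ) * d (k+1) - d k| ≤ (s (k+2) : ℝ) * (0:ℝ) := by
    intro k
    have h := hDrec (k+1) (by omega)
    simp only [Nat.add_sub_cancel] at h
    have : d (k+2) = (s (k+2) : ℝ) * d (k+1) + d k := by
      simp only [hddef, h]
      rw [Real.log_mul (pow_ne_zero _ (hDpos (k+1)).ne') (hDpos k).ne', Real.log_pow]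
    rw [this]
    simp
  obtain ⟨γ, hγt, hγ⟩ := key_approx s hs' w L hL0 hwrec
  obtain ⟨μ, hμt, hμ⟩ := key_approx s hs' d 0 le_rfl hdrec
  set Mw : ℝ := |w 0| + 2 * L with hMw
  set Md : ℝ := |d 0| + 2 * 0 with hMd
  -- γ > 0
  have hwlim : Tendsto w atTop atTop := Real.tendsto_log_atTop.comp hWlim
  have hγpos : 0 < γ := by
    by_contra hcon
    push_neg at hcon
    have hub : ∀ k, w (k+1) ≤ 4 * Mw := by
      intro k
      have h := (abs_le.mp (hγ k)).2
      have hα := alS_pos s hs' k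
      nlinarith
    have := hwlim.eventually_gt_atTop (4 * Mw)
    rw [eventually_atTop] at this
    obtain ⟨N, hN⟩ := this
    exact absurd (hub N) (hN (N+1) (by omega)).not_ge
  -- μ ≥ 0
  have hμ0 : 0 ≤ μ := by
    apply ge_of_tendsto' hμt
    intro k
    exact div_nonneg (hd0 (k+1)) (alS_pos s hs' k).le
  set δ : ℝ := μ / γ with hδdef
  have hδ0 : 0 ≤ δ := div_nonneg hμ0 hγpos.le
  have hμγ : μ = δ * γ := by
    rw [hδdef, div_mul_cancel₀]
    exact hγpos.ne'
  set B1 : ℝ := 4 * Md + δ * (4 * Mw) with hB1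
  have hbd : ∀ k, |d (k+1) - δ * w (k+1)| ≤ B1 := by
    intro k
    have hid : d (k+1) - δ * w (k+1)
        = (d (k+1) - μ * alS s (k+1)) + δ * (γ * alS s (k+1) - w (k+1)) := by
      rw [hμγ]; ring
    rw [hid]
    calc |(d (k+1) - μ * alS s (k+1)) + δ * (γ * alS s (k+1) - w (k+1))|
        ≤ |d (k+1) - μ * alS s (k+1)| + |δ * (γ * alS s (k+1) - w (k+1))| := abs_add_le _ _
      _ ≤ 4 * Md + δ * (4 * Mw) := by
          rw [abs_mul, abs_of_nonneg hδ0,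
            abs_sub_comm (γ * alS s (k+1)) (w (k+1))]
          have h1 := hμ k
          have h2 := hγ k
          have h3 : δ * |w (k+1) - γ * alS s (k+1)| ≤ δ * (4 * Mw) :=
            mul_le_mul_of_nonneg_left h2 hδ0
          linarith
  set B : ℝ := max B1 |d 0 - δ * w 0| with hBdef
  have hbdall : ∀ k, |d k - δ * w k| ≤ B := by
    intro k
    cases k with
    | zero => exact le_max_right _ _
    | succ k => exact (hbd k).trans (le_max_left _ _)
  refine ⟨δ, hδ0, Real.exp B, Real.exp_pos B, fun k => ?_⟩
  have hWp : W k ^ δ = Real.exp (Real.log (W k) * δ) := Real.rpow_def_of_pos (hW k) δ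
  have hDe : D k = Real.exp (d k) := (Real.exp_log (hDpos k)).symm
  obtain ⟨hl, hr⟩ := abs_le.mp (hbdall k)
  constructor
  · rw [hWp, hDe, ← Real.exp_neg, ← Real.exp_add, Real.exp_le_exp]
    have : w k = Real.log (W k) := rfl
    rw [← this]
    nlinarith [hl, hr]
  · rw [hWp, hDe, ← Real.exp_add, Real.exp_le_exp]
    have : w k = Real.log (W k) := rfl
    rw [← this]
    nlinarith [hl, hr]
end

section
/- With the hypotheses of the previous result, assume additionally α, β ≥ 0 are such that (c₂W₀)^α ≤ D₀ ≤ (c₁W₀)^β and (c₂W₁)^α ≤ D₁ ≤ (c₁W₁)^β, where c₁ ≤ c₂ are the multiplicative growth constants satisfying c₁^{s_{k+1}} Wₖ^{s_{k+1}} W_{k-1} ≤ W_{k+1} ≤ c₂^{s_{k+1}} Wₖ^{s_{k+1}} W_{k-1}. Then (c₂Wₖ)^α ≤ Dₖ ≤ (c₁Wₖ)^β for all k ≥ 0, and hence the exponent δ with Dₖ ≍ Wₖ^δ satisfies α ≤ δ ≤ β. -/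
/-!
Both bounds propagate along the two-step recurrences: the extra factor `c` in `(c W k)` is
exactly what turns `c ^ s * W k ^ s * W (k - 1)` into the product `(c W k) ^ s * (c W (k - 1))`,
which matches the shape of `D (k + 1) = D k ^ s * D (k - 1)`. If moreover `D k ≍ W k ^ δ`, then
`W k ^ α ≲ W k ^ δ ≲ W k ^ β` along a sequence tending to infinity, which forces `α ≤ δ ≤ β`.
-/

open Filter

theorem mul_mul_pow_mul_rpow {c u v : ℝ} (hc : 0 ≤ c) (hu : 0 ≤ u) (hv : 0 ≤ v) (n : ℕ)
    (γ : ℝ) : (c * (c ^ n * u ^ n * v)) ^ γ = ((c * u) ^ γ) ^ n * (c * v) ^ γ := by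
  rw [show c * (c ^ n * u ^ n * v) = (c * u) ^ n * (c * v) by ring,
    Real.mul_rpow (by positivity) (by positivity), ← Real.rpow_natCast_mul (by positivity),
    ← Real.rpow_mul_natCast (by positivity), mul_comm γ]

theorem mul_rpow_le_pow_mul {c u v w x y γ : ℝ} {n : ℕ} (hc : 0 ≤ c) (hu : 0 ≤ u) (hv : 0 ≤ v)
    (hw : 0 ≤ w) (hγ : 0 ≤ γ) (hwuv : w ≤ c ^ n * u ^ n * v) (hx : (c * u) ^ γ ≤ x)
    (hy : (c * v) ^ γ ≤ y) : (c * w) ^ γ ≤ x ^ n * y :=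
  calc (c * w) ^ γ ≤ (c * (c ^ n * u ^ n * v)) ^ γ := by gcongr
    _ = ((c * u) ^ γ) ^ n * (c * v) ^ γ := mul_mul_pow_mul_rpow hc hu hv n γ
    _ ≤ x ^ n * y := by
      have hx₀ : 0 ≤ x := (Real.rpow_nonneg (mul_nonneg hc hu) γ).trans hx
      gcongr

theorem pow_mul_le_mul_rpow {c u v w x y γ : ℝ} {n : ℕ} (hc : 0 ≤ c) (hu : 0 ≤ u) (hv : 0 ≤ v)
    (hx₀ : 0 ≤ x) (hy₀ : 0 ≤ y) (hγ : 0 ≤ γ) (hwuv : c ^ n * u ^ n * v ≤ w)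
    (hx : x ≤ (c * u) ^ γ) (hy : y ≤ (c * v) ^ γ) : x ^ n * y ≤ (c * w) ^ γ :=
  calc x ^ n * y ≤ ((c * u) ^ γ) ^ n * (c * v) ^ γ := by gcongr
    _ = (c * (c ^ n * u ^ n * v)) ^ γ := (mul_mul_pow_mul_rpow hc hu hv n γ).symm
    _ ≤ (c * w) ^ γ := by gcongr

section Recurrence

variable {s : ℕ → ℕ} {W D : ℕ → ℝ} {c γ : ℝ}

theorem mul_rpow_le_of_rec (hc : 0 ≤ c) (hγ : 0 ≤ γ) (hW : ∀ k, 0 ≤ W k)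
    (hWrec : ∀ k, 1 ≤ k → W (k + 1) ≤ c ^ s (k + 1) * W k ^ s (k + 1) * W (k - 1))
    (hDrec : ∀ k, 1 ≤ k → D (k + 1) = D k ^ s (k + 1) * D (k - 1))
    (h0 : (c * W 0) ^ γ ≤ D 0) (h1 : (c * W 1) ^ γ ≤ D 1) :
    ∀ k, (c * W k) ^ γ ≤ D k := by
  refine Nat.twoStepInduction h0 h1 fun k hk hk₁ ↦ ?_
  rw [show k + 2 = k + 1 + 1 from rfl, hDrec (k + 1) k.succ_pos]
  exact mul_rpow_le_pow_mul hc (hW _) (hW _) (hW _) hγ (hWrec (k + 1) k.succ_pos) hk₁ hk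

theorem le_mul_rpow_of_rec (hc : 0 ≤ c) (hγ : 0 ≤ γ) (hW : ∀ k, 0 ≤ W k) (hD : ∀ k, 0 ≤ D k)
    (hWrec : ∀ k, 1 ≤ k → c ^ s (k + 1) * W k ^ s (k + 1) * W (k - 1) ≤ W (k + 1))
    (hDrec : ∀ k, 1 ≤ k → D (k + 1) = D k ^ s (k + 1) * D (k - 1))
    (h0 : D 0 ≤ (c * W 0) ^ γ) (h1 : D 1 ≤ (c * W 1) ^ γ) :
    ∀ k, D k ≤ (c * W k) ^ γ := by
  refine Nat.twoStepInduction h0 h1 fun k hk hk₁ ↦ ?_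
  rw [show k + 2 = k + 1 + 1 from rfl, hDrec (k + 1) k.succ_pos]
  exact pow_mul_le_mul_rpow hc (hW _) (hW _) (hD _) (hD _) hγ (hWrec (k + 1) k.succ_pos)
    hk₁ hk

end Recurrence

theorem le_of_eventually_mul_rpow_le {ι : Type*} {l : Filter ι} [l.NeBot] {W : ι → ℝ}
    (hW : Tendsto W l atTop) {a b α δ : ℝ} (ha : 0 < a)
    (h : ∀ᶠ i in l, a * W i ^ α ≤ b * W i ^ δ) : α ≤ δ := by
  by_contra! hδα
  have hlarge : ∀ᶠ i in l, b / a < W i ^ (α - δ) :=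
    ((tendsto_rpow_atTop (sub_pos.2 hδα)).comp hW).eventually_gt_atTop _
  obtain ⟨i, hi, hWi, hbig⟩ := (h.and ((hW.eventually_gt_atTop 0).and hlarge)).exists
  have hWδ : 0 < W i ^ δ := Real.rpow_pos_of_pos hWi δ
  rw [div_lt_iff₀ ha] at hbig
  refine hi.not_gt ?_
  calc b * W i ^ δ < W i ^ (α - δ) * a * W i ^ δ := by gcongr
    _ = a * W i ^ α := by rw [Real.rpow_sub hWi]; field_simp

theorem stmt13_general (s : ℕ → ℕ)
    (W : ℕ → ℝ) (hW : ∀ k, 0 < W k) (hWlim : Tendsto W atTop atTop)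
    (c₁ c₂ : ℝ) (hc₁ : 0 < c₁) (hc₁₂ : c₁ ≤ c₂)
    (hWrec : ∀ k, 1 ≤ k →
      c₁ ^ s (k + 1) * W k ^ s (k + 1) * W (k - 1) ≤ W (k + 1) ∧
      W (k + 1) ≤ c₂ ^ s (k + 1) * W k ^ s (k + 1) * W (k - 1))
    (D : ℕ → ℝ)
    (hDrec : ∀ k, 1 ≤ k → D (k + 1) = D k ^ s (k + 1) * D (k - 1))
    (α β : ℝ) (hα : 0 ≤ α) (hβ : 0 ≤ β)
    (h0 : (c₂ * W 0) ^ α ≤ D 0 ∧ D 0 ≤ (c₁ * W 0) ^ β)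
    (h1 : (c₂ * W 1) ^ α ≤ D 1 ∧ D 1 ≤ (c₁ * W 1) ^ β) :
    (∀ k, (c₂ * W k) ^ α ≤ D k ∧ D k ≤ (c₁ * W k) ^ β) ∧
    ∀ δ : ℝ, (∃ C : ℝ, 0 < C ∧ ∀ k, C⁻¹ * W k ^ δ ≤ D k ∧ D k ≤ C * W k ^ δ) →
      α ≤ δ ∧ δ ≤ β := by
  have hc₂ : 0 < c₂ := hc₁.trans_le hc₁₂
  have hW₀ : ∀ k, 0 ≤ W k := fun k ↦ (hW k).le
  have hlower := mul_rpow_le_of_rec hc₂.le hα hW₀ (fun k hk ↦ (hWrec k hk).2) hDrec h0.1 h1.1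
  have hupper := le_mul_rpow_of_rec hc₁.le hβ hW₀
    (fun k ↦ (Real.rpow_nonneg (mul_pos hc₂ (hW k)).le α).trans (hlower k))
    (fun k hk ↦ (hWrec k hk).1) hDrec h0.2 h1.2
  refine ⟨fun k ↦ ⟨hlower k, hupper k⟩, fun δ ⟨C, hC, hCD⟩ ↦ ⟨?_, ?_⟩⟩
  · refine le_of_eventually_mul_rpow_le hWlim (Real.rpow_pos_of_pos hc₂ α)
      (Eventually.of_forall fun k ↦ ?_) (b := C)
    rw [← Real.mul_rpow hc₂.le (hW₀ k)]
    exact (hlower k).trans (hCD k).2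
  · refine le_of_eventually_mul_rpow_le hWlim (inv_pos.2 hC)
      (Eventually.of_forall fun k ↦ ?_) (b := c₁ ^ β)
    rw [← Real.mul_rpow hc₁.le (hW₀ k)]
    exact (hCD k).1.trans (hupper k)

theorem stmt13 (s : ℕ → ℕ) (hs : ∀ k, 1 ≤ k → 0 < s k) (hs1 : s 1 = 1)
    (W : ℕ → ℝ) (hW : ∀ k, 0 < W k) (hWlim : Tendsto W atTop atTop)
    (c₁ c₂ : ℝ) (hc₁ : 0 < c₁) (hc₁₂ : c₁ ≤ c₂)
    (hWrec : ∀ k, 1 ≤ k →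
      c₁ ^ s (k + 1) * W k ^ s (k + 1) * W (k - 1) ≤ W (k + 1) ∧
      W (k + 1) ≤ c₂ ^ s (k + 1) * W k ^ s (k + 1) * W (k - 1))
    (D : ℕ → ℝ) (hD : ∀ k, 1 ≤ D k)
    (hDrec : ∀ k, 1 ≤ k → D (k + 1) = D k ^ s (k + 1) * D (k - 1))
    (α β : ℝ) (hα : 0 ≤ α) (hβ : 0 ≤ β)
    (h0 : (c₂ * W 0) ^ α ≤ D 0 ∧ D 0 ≤ (c₁ * W 0) ^ β)
    (h1 : (c₂ * W 1) ^ α ≤ D 1 ∧ D 1 ≤ (c₁ * W 1) ^ β) :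
    (∀ k, (c₂ * W k) ^ α ≤ D k ∧ D k ≤ (c₁ * W k) ^ β) ∧
    ∀ δ : ℝ, (∃ C : ℝ, 0 < C ∧ ∀ k, C⁻¹ * W k ^ δ ≤ D k ∧ D k ≤ C * W k ^ δ) →
      α ≤ δ ∧ δ ≤ β :=
  stmt13_general s W hW hWlim c₁ c₂ hc₁ hc₁₂ hWrec D hDrec α β hα hβ h0 h1
end

section
/- For n ≥ 1 and 1 ≤ a ≤ n, let δ_{a,n} = n + n·√(1 + 4/(an)) (which equals twice the value of the periodic continued fraction [n; a,n,a,n,…]). Then the union over all n ≥ 1 and 1 ≤ a ≤ n of the intervals [δ_{a,n}, δ_{a,n}+1] equals [1+√5, 2+√5] ∪ [2+2√2, 3+2√3] ∪ [3+√13, ∞). In particular 0 ≤ δ_{a,n} − δ_{a+1,n} ≤ 1 for n ≥ 2, 1 ≤ a < n, and |δ_{n+1,n+1} − δ_{1,n}| < 1 for n ≥ 3. -/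
open Set

/-- `δ_{a,n} = n + n·√(1 + 4/(an))`, twice the value of `[n; a, n, a, n, …]`. -/
noncomputable def delta (a n : ℕ) : ℝ :=
  (n : ℝ) + (n : ℝ) * Real.sqrt (1 + 4 / ((a : ℝ) * (n : ℝ)))

/-! Since `δ_{a,n} = n + √(n² + 4n/a)`, for fixed `n` the values decrease in `a` with consecutive
gaps at most `1`, so the intervals of the `n`-th block fill `[δ_{n,n}, δ_{1,n} + 1]`. For `n ≥ 3`
consecutive blocks overlap, because `δ_{n+1,n+1} < δ_{1,n} + 1`, and `δ_{1,n} ≥ n` is unbounded;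
hence the blocks with `n ≥ 3` fill `[δ_{3,3}, ∞)`, while the blocks `n = 1, 2` are the two bounded
pieces. -/

lemma delta_eq_add_sqrt (a n : ℕ) : delta a n = n + √((n : ℝ) ^ 2 + 4 * n / a) := by
  rcases n.eq_zero_or_pos with rfl | hn
  · simp [delta]
  have hn : (n : ℝ) ≠ 0 := by positivity
  rw [delta, ← Real.sqrt_sq (Nat.cast_nonneg (α := ℝ) n), ← Real.sqrt_mul (sq_nonneg _),
    Real.sqrt_sq (Nat.cast_nonneg _)]
  congr 2
  field_simp

lemma delta_self {n : ℕ} (hn : n ≠ 0) : delta n n = n + √((n : ℝ) ^ 2 + 4) := by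
  rw [delta_eq_add_sqrt, mul_div_assoc, div_self (by positivity), mul_one]

lemma natCast_le_delta (a n : ℕ) : (n : ℝ) ≤ delta a n :=
  le_add_of_nonneg_right (by positivity)

lemma delta_le_delta {a b : ℕ} (n : ℕ) (ha : 0 < a) (hab : a ≤ b) : delta b n ≤ delta a n := by
  rw [delta_eq_add_sqrt, delta_eq_add_sqrt]
  gcongr

lemma delta_le_delta_succ_add_one {a : ℕ} (n : ℕ) (ha : 1 ≤ a) :
    delta a n ≤ delta (a + 1) n + 1 := by
  have ha : (1 : ℝ) ≤ a := by exact_mod_cast ha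
  have hn : (0 : ℝ) ≤ n := n.cast_nonneg
  rw [delta_eq_add_sqrt, delta_eq_add_sqrt]
  push_cast
  set s := √((n : ℝ) ^ 2 + 4 * n / (a + 1))
  have hns : (n : ℝ) ≤ s := (Real.le_sqrt hn (by positivity)).2 (by simp; positivity)
  have hs : s ^ 2 = (n : ℝ) ^ 2 + 4 * n / (a + 1) := Real.sq_sqrt (by positivity)
  -- the two radicands differ by `4n / (a(a+1)) ≤ 2n ≤ 2s`
  have hdiff : 4 * (n : ℝ) / a - 4 * n / (a + 1) ≤ 2 * n := by
    rw [div_sub_div _ _ (by positivity) (by positivity), div_le_iff₀ (by positivity)]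
    nlinarith [mul_nonneg hn (by nlinarith : (0 : ℝ) ≤ a * (a + 1) - 2)]
  have : √((n : ℝ) ^ 2 + 4 * n / a) ≤ s + 1 :=
    (Real.sqrt_le_left (by positivity)).2 (by nlinarith)
  linarith

lemma delta_one_lt_delta_succ_self (n : ℕ) : delta 1 n < delta (n + 1) (n + 1) := by
  rw [delta_eq_add_sqrt, delta_self n.succ_ne_zero]
  push_cast
  have h1 : √((n : ℝ) ^ 2 + 4 * n / 1) < n + 2 := (Real.sqrt_lt' (by positivity)).2 (by nlinarith)
  have h2 : (n : ℝ) + 1 ≤ √(((n : ℝ) + 1) ^ 2 + 4) :=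
    (Real.le_sqrt (by positivity) (by positivity)).2 (by linarith)
  linarith

lemma delta_succ_self_lt_delta_one_add_one {n : ℕ} (hn : 3 ≤ n) :
    delta (n + 1) (n + 1) < delta 1 n + 1 := by
  have hn : (3 : ℝ) ≤ n := by exact_mod_cast hn
  rw [delta_self n.succ_ne_zero, delta_eq_add_sqrt]
  push_cast
  have : √(((n : ℝ) + 1) ^ 2 + 4) < √((n : ℝ) ^ 2 + 4 * n / 1) :=
    Real.sqrt_lt_sqrt (by positivity) (by nlinarith)
  linarith

lemma delta_self_le_delta_self {m n : ℕ} (hm : m ≠ 0) (hmn : m ≤ n) : delta m m ≤ delta n n := by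
  rw [delta_self hm, delta_self (by omega)]
  gcongr

lemma delta_one_one : delta 1 1 = 1 + √5 := by
  rw [delta_self one_ne_zero]; norm_num

lemma delta_two_two : delta 2 2 = 2 + 2 * √2 := by
  rw [delta_self two_ne_zero, show ((2 : ℕ) : ℝ) ^ 2 + 4 = 2 ^ 2 * 2 by norm_num,
    Real.sqrt_mul (by positivity), Real.sqrt_sq zero_le_two]
  norm_num

lemma delta_one_two : delta 1 2 = 2 + 2 * √3 := by
  rw [delta_eq_add_sqrt]
  norm_num
  rw [show (12 : ℝ) = 2 ^ 2 * 3 by norm_num, Real.sqrt_mul (by positivity),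
    Real.sqrt_sq zero_le_two]

lemma delta_three_three : delta 3 3 = 3 + √13 := by
  rw [delta_self three_ne_zero]; norm_num

lemma exists_mem_Icc_of_chain {lo hi : ℕ → ℝ} {m n : ℕ} (hmn : m ≤ n)
    (hchain : ∀ i, m ≤ i → i < n → lo (i + 1) ≤ hi i) {x : ℝ} (hlo : lo m ≤ x) (hhi : x ≤ hi n) :
    ∃ i, m ≤ i ∧ i ≤ n ∧ x ∈ Icc (lo i) (hi i) := by
  induction n with
  | zero => exact ⟨0, hmn, le_rfl, by rwa [Nat.le_zero.1 hmn] at hlo, hhi⟩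
  | succ n ih =>
    by_cases hm : m = n + 1
    · subst hm
      exact ⟨n + 1, le_rfl, le_rfl, hlo, hhi⟩
    by_cases hx : x ≤ hi n
    · obtain ⟨i, hmi, hin, hxi⟩ := ih (by omega) (fun i hi hin ↦ hchain i hi (by omega)) hx
      exact ⟨i, hmi, by omega, hxi⟩
    · exact ⟨n + 1, hmn, le_rfl, (hchain n (by omega) n.lt_succ_self).trans (not_le.1 hx).le, hhi⟩

lemma Ici_subset_iUnion_Icc_of_chain {lo hi : ℕ → ℝ} {m : ℕ}
    (hchain : ∀ i, m ≤ i → lo (i + 1) ≤ hi i) (hhi : Filter.Tendsto hi Filter.atTop Filter.atTop) :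
    Ici (lo m) ⊆ ⋃ (i : ℕ) (_ : m ≤ i), Icc (lo i) (hi i) := by
  intro x hx
  obtain ⟨N, hN⟩ := Filter.eventually_atTop.1 (hhi.eventually_ge_atTop x)
  obtain ⟨i, hmi, -, hxi⟩ := exists_mem_Icc_of_chain (le_max_right N m)
    (fun i hi _ ↦ hchain i hi) hx (hN _ (le_max_left N m))
  exact mem_iUnion₂.2 ⟨i, hmi, hxi⟩

lemma iUnion_Icc_delta_eq {n : ℕ} (hn : 1 ≤ n) :
    ⋃ (a : ℕ) (_ : 1 ≤ a) (_ : a ≤ n), Icc (delta a n) (delta a n + 1) =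
      Icc (delta n n) (delta 1 n + 1) := by
  apply Subset.antisymm
  · simp only [iUnion_subset_iff]
    intro a ha han
    exact Icc_subset_Icc (delta_le_delta n ha han) (by gcongr; exact delta_le_delta n one_pos ha)
  · rintro x ⟨hlo, hhi⟩
    -- the index `i` stands for `a = n - i`, so the chain runs from `a = n` down to `a = 1`
    obtain ⟨i, -, hin, hxi⟩ := exists_mem_Icc_of_chain (lo := fun i ↦ delta (n - i) n)
      (hi := fun i ↦ delta (n - i) n + 1) (Nat.zero_le (n - 1))
      (fun i _ hi ↦ by
        rw [show n - i = n - (i + 1) + 1 by omega]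
        exact delta_le_delta_succ_add_one n (by omega))
      (by simpa using hlo) (by rwa [show n - (n - 1) = 1 by omega])
    simp only [mem_iUnion]
    exact ⟨n - i, by omega, by omega, hxi⟩

lemma iUnion_Icc_delta_self_delta_one_eq :
    ⋃ (n : ℕ) (_ : 3 ≤ n), Icc (delta n n) (delta 1 n + 1) = Ici (delta 3 3) := by
  apply Subset.antisymm
  · simp only [iUnion_subset_iff]
    exact fun n hn ↦ (Icc_subset_Ici_self).trans
      (Ici_subset_Ici.2 (delta_self_le_delta_self three_ne_zero hn))
  · refine Ici_subset_iUnion_Icc_of_chain (lo := fun n ↦ delta n n) (hi := fun n ↦ delta 1 n + 1)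
      (fun n hn ↦ (delta_succ_self_lt_delta_one_add_one hn).le) ?_
    exact Filter.tendsto_atTop_add_const_right _ 1
      (Filter.tendsto_atTop_mono (natCast_le_delta 1) tendsto_natCast_atTop_atTop)

lemma iUnion_one_le_eq {α : Type*} (s : ℕ → Set α) :
    ⋃ (n : ℕ) (_ : 1 ≤ n), s n = s 1 ∪ s 2 ∪ ⋃ (n : ℕ) (_ : 3 ≤ n), s n := by
  ext x
  simp only [mem_iUnion, mem_union]
  constructor
  · rintro ⟨n, hn, hx⟩
    rcases (by omega : n = 1 ∨ n = 2 ∨ 3 ≤ n) with rfl | rfl | hn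
    exacts [Or.inl (Or.inl hx), Or.inl (Or.inr hx), Or.inr ⟨n, hn, hx⟩]
  · rintro ((hx | hx) | ⟨n, hn, hx⟩)
    exacts [⟨1, le_rfl, hx⟩, ⟨2, one_le_two, hx⟩, ⟨n, by omega, hx⟩]

theorem stmt19 :
    (⋃ (n : ℕ) (_ : 1 ≤ n) (a : ℕ) (_ : 1 ≤ a) (_ : a ≤ n),
        Icc (delta a n) (delta a n + 1)) =
      Icc (1 + Real.sqrt 5) (2 + Real.sqrt 5) ∪
        Icc (2 + 2 * Real.sqrt 2) (3 + 2 * Real.sqrt 3) ∪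
        Ici (3 + Real.sqrt 13) ∧
    (∀ n : ℕ, 2 ≤ n → ∀ a : ℕ, 1 ≤ a → a < n →
      0 ≤ delta a n - delta (a + 1) n ∧ delta a n - delta (a + 1) n ≤ 1) ∧
    (∀ n : ℕ, 3 ≤ n → |delta (n + 1) (n + 1) - delta 1 n| < 1) := by
  refine ⟨?_, fun n _ a ha _ ↦ ?_, fun n hn ↦ ?_⟩
  · rw [iUnion₂_congr fun n (hn : 1 ≤ n) ↦ iUnion_Icc_delta_eq hn, iUnion_one_le_eq,
      iUnion_Icc_delta_self_delta_one_eq, delta_one_one, delta_two_two, delta_one_two,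
      delta_three_three]
    ring_nf
  · have := delta_le_delta n ha a.le_succ
    have := delta_le_delta_succ_add_one n ha
    constructor <;> linarith
  · have := delta_one_lt_delta_succ_self n
    have := delta_succ_self_lt_delta_one_add_one hn
    rw [abs_lt]
    constructor <;> linarith
end
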